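/- arXiv:1901.10230 — 6 statements merged into one kernel-verified Lean document; each statement's English description precedes it below -/
import Mathlib

section
/- A d-block-switch transformation preserves the multiset of all (d+1)-length contiguous subsequences: for any y in Y^M, the multiset { (T_b^{(d)}(y))_{i:(i+d)} : 1 ≤ i ≤ M-d } equals the multiset { y_{i:(i+d)} : 1 ≤ i ≤ M-d }. -/
open scoped Classical

variable {Y : Type*}

/-- The contiguous slice of a list: positions `a, a+1, …, b-1` (0-indexed, half-open). -/
def seg (y : List Y) (a b : ℕ) : List Y := (y.drop a).take (b - a)

/-- The `d`-block-switch transformation `T_b^{(d)}` for `b = (i,j,k,l)` (0-indexed, half-open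
blocks `[i,j)` and `[k,l)`): if the two blocks agree on their first `d` and last `d` symbols,
they are interchanged; otherwise the sequence is left unchanged. -/
noncomputable def blockSwitch (d i j k l : ℕ) (y : List Y) : List Y :=
  if seg y i (i + d) = seg y k (k + d) ∧ seg y (j - d) j = seg y (l - d) l then
    y.take i ++ seg y k l ++ seg y j k ++ seg y i j ++ y.drop l
  else y

/-- Validity of `b = (i,j,k,l)` for a `d`-block-switch on sequences of length `M`:
the blocks `[i,j)` and `[k,l)` are disjoint, contained in `[0,M)`, each of length ≥ d+1. -/
def ValidIdx (d M i j k l : ℕ) : Prop :=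
  i + d + 1 ≤ j ∧ j ≤ k ∧ k + d + 1 ≤ l ∧ l ≤ M

/-- The multiset of all `(d+1)`-length contiguous windows of a list. -/
def windows (d : ℕ) (y : List Y) : Multiset (List Y) :=
  ↑((List.range (y.length - d)).map fun i => seg y i (i + d + 1))

-- auxiliary
lemma getElem?_seg (y : List Y) (a b t : ℕ) :
    (seg y a b)[t]? = if t < b - a then y[a + t]? else none := by
  unfold seg
  by_cases h : t < b - a
  · rw [if_pos h, List.getElem?_take_of_lt h, List.getElem?_drop]
  · rw [if_neg h]
    apply List.getElem?_eq_none
    simp only [List.length_take, List.length_drop]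
    omega

lemma seg_length (y : List Y) (a b : ℕ) (h : b ≤ y.length) :
    (seg y a b).length = b - a := by
  simp only [seg, List.length_take, List.length_drop]
  omega

lemma gcongr' (y : List Y) {a b : ℕ} (h : a = b) : y[a]? = y[b]? := by rw [h]

/-- the permutation of window positions induced by the block switch -/
def sig (d i j k l p : ℕ) : ℕ :=
  if p < i then p
  else if p < i + (l - k) - d then p + (k - i)
  else if p < i + (l - k) + (k - j) then p + j - (i + (l - k))
  else if p < l - d then p - ((l - k) + (k - j))
  else p

set_option maxHeartbeats 2000000 in
/-- A d-block-switch transformation preserves the multiset of (d+1)-length contiguous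
subsequences (transition windows). -/
theorem blockSwitch_windows {M d i j k l : ℕ} (hM : d + 1 ≤ M) (hb : ValidIdx d M i j k l)
    (y : List Y) (hy : y.length = M) :
    windows d (blockSwitch d i j k l y) = windows d y := by
  obtain ⟨h1, h2, h3, h4⟩ := hb
  unfold blockSwitch
  split_ifs with hcond
  case neg => rfl
  obtain ⟨hc1, hc2⟩ := hcond
  have htake : y.take i = seg y 0 i := by simp [seg]
  set y' := y.take i ++ seg y k l ++ seg y j k ++ seg y i j ++ y.drop l with hy'
  have l0 : (seg y 0 i).length = i := by rw [seg_length y 0 i (by omega)]; omega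
  have l1 : (seg y k l).length = l - k := seg_length y k l (by omega)
  have l2 : (seg y j k).length = k - j := seg_length y j k (by omega)
  have l3 : (seg y i j).length = j - i := seg_length y i j (by omega)
  have hlen : y'.length = M := by
    rw [hy', htake]
    simp only [List.length_append, l0, l1, l2, l3, List.length_drop, hy]
    omega
  have c1 : ∀ t, t < d → y[i + t]? = y[k + t]? := by
    intro t ht
    have h := congrArg (fun s => s[t]?) hc1
    simpa only [getElem?_seg, show i + d - i = d by omega, show k + d - k = d by omega,
      if_pos ht] using h
  have c2 : ∀ t, t < d → y[j - d + t]? = y[l - d + t]? := by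
    intro t ht
    have h := congrArg (fun s => s[t]?) hc2
    simpa only [getElem?_seg, show j - (j - d) = d by omega, show l - (l - d) = d by omega,
      if_pos ht] using h
  have master : ∀ q : ℕ, y'[q]? =
      if q < i then y[q]?
      else if q < i + (l - k) then y[k + (q - i)]?
      else if q < i + (l - k) + (k - j) then y[j + (q - (i + (l - k)))]?
      else if q < l then y[i + (q - (i + (l - k) + (k - j)))]?
      else y[q]? := by
    intro q
    rw [hy', htake]
    simp only [List.getElem?_append, List.length_append, l0, l1, l2, l3,
      getElem?_seg, List.getElem?_drop]
    split_ifs <;> first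
      | rfl
      | (exfalso; omega)
      | (exact gcongr' _ (by omega))
  have hwin : ∀ p, p < M - d →
      seg y' p (p + d + 1) = seg y (sig d i j k l p) (sig d i j k l p + d + 1) := by
    intro p hp
    apply List.ext_getElem?
    intro t
    rw [getElem?_seg, getElem?_seg, show p + d + 1 - p = d + 1 by omega,
      show sig d i j k l p + d + 1 - sig d i j k l p = d + 1 by omega]
    by_cases ht : t < d + 1
    · rw [if_pos ht, if_pos ht, master (p + t)]
      unfold sig
      split_ifs <;> first
        | rfl
        | (exfalso; omega)
        | (exact gcongr' _ (by omega))
        | (rw [← c1 (p + t - i) (by omega)]; exact gcongr' _ (by omega))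
        | (rw [c1 (p + t - (i + (l - k) + (k - j))) (by omega)]; exact gcongr' _ (by omega))
        | (rw [show k + (p + t - i) = l - d + (p + t - (i + (l - k) - d)) by omega,
              ← c2 (p + t - (i + (l - k) - d)) (by omega)]; exact gcongr' _ (by omega))
        | (rw [show i + (p + t - (i + (l - k) + (k - j))) = j - d + (p + t - (l - d)) by omega,
              c2 (p + t - (l - d)) (by omega)]; exact gcongr' _ (by omega))
    · rw [if_neg ht, if_neg ht]
  -- permutation part
  have hinj : Set.InjOn (sig d i j k l) ↑(Finset.range (M - d)) := by
    intro a ha b hb hab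
    simp only [Finset.coe_range, Set.mem_Iio] at ha hb
    unfold sig at hab
    split_ifs at hab <;> omega
  have himage : Finset.image (sig d i j k l) (Finset.range (M - d)) = Finset.range (M - d) := by
    apply Finset.eq_of_subset_of_card_le
    · intro x hx
      simp only [Finset.mem_image, Finset.mem_range] at hx ⊢
      obtain ⟨a, ha, rfl⟩ := hx
      unfold sig
      split_ifs <;> omega
    · rw [Finset.card_image_of_injOn hinj]
  have hperm : (Finset.range (M - d)).val.map (sig d i j k l) = (Finset.range (M - d)).val := by
    rw [← Finset.image_val_of_injOn hinj, himage]
  have e1 : windows d y' = Multiset.map (fun p => seg y' p (p + d + 1))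
      (Finset.range (M - d)).val := by
    unfold windows
    rw [hlen]
    rfl
  have e2 : windows d y = Multiset.map (fun p => seg y p (p + d + 1))
      (Finset.range (M - d)).val := by
    unfold windows
    rw [hy]
    rfl
  rw [e1, e2]
  calc Multiset.map (fun p => seg y' p (p + d + 1)) (Finset.range (M - d)).val
      = Multiset.map (fun p => seg y (sig d i j k l p) (sig d i j k l p + d + 1))
          (Finset.range (M - d)).val := by
        apply Multiset.map_congr rfl
        intro p hp
        exact hwin p (by simpa using hp)
    _ = Multiset.map (fun p => seg y p (p + d + 1))
          ((Finset.range (M - d)).val.map (sig d i j k l)) := by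
        rw [Multiset.map_map]
        rfl
    _ = _ := by rw [hperm]
end

section
/- The function ν(y) = (y_{1:d}, Σ_{i=1}^{M-d} 2^{-c(y_{i:(i+d)})}) is d-block-switch invariant: ν(T_b^{(d)}(y)) = ν(y) for every y in Y^M and every d-block-switch transformation T_b^{(d)}. -/
open scoped Classical

variable {Y : Type*}

theorem seg_getElem?_eq (y : List Y) (a b t : ℕ) (ht : t < b - a) :
    (seg y a b)[t]? = y[a + t]? := by
  simp [seg, List.getElem?_take, ht, List.getElem?_drop]

theorem seg_length_le (y : List Y) (a b : ℕ) : (seg y a b).length ≤ b - a := by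
  simp [seg]

/-- The index bijection on window start positions induced by a block switch. -/
def phiB (d i j k l n : ℕ) : ℕ :=
  if n < i then n
  else if n + d < i + (l - k) then n - i + k
  else if n < i + (l - j) then (n + j) - (i + (l - k))
  else if n + d < l then (n + i) - (i + (l - j))
  else n

/-- The inverse of `phiB`. -/
def phiB' (d i j k l n : ℕ) : ℕ :=
  if n < i then n
  else if n + d < j then n + (l - j)
  else if n < k then (n + (i + (l - k))) - j
  else if n + d < l then (n + i) - k
  else n

theorem phiB'_phiB (d i j k l n : ℕ) (hij : i + d + 1 ≤ j) (hjk : j ≤ k)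
    (hkl : k + d + 1 ≤ l) : phiB' d i j k l (phiB d i j k l n) = n := by
  unfold phiB phiB'
  split_ifs <;> omega

theorem phiB_phiB' (d i j k l n : ℕ) (hij : i + d + 1 ≤ j) (hjk : j ≤ k)
    (hkl : k + d + 1 ≤ l) : phiB d i j k l (phiB' d i j k l n) = n := by
  unfold phiB phiB'
  split_ifs <;> omega

/-- The function ν(y) = (y_{1:d}, Σ_i 2^{-c(y_{i:(i+d)})}) is d-block-switch invariant,
where c is injective on the (d+1)-length words over the countable set Y. -/
theorem nu_blockSwitch_invariant [Countable Y] {d M : ℕ} (hM : d + 1 ≤ M)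
    (c : List Y → ℕ) (hc : Set.InjOn c {w : List Y | w.length = d + 1})
    {i j k l : ℕ} (hb : ValidIdx d M i j k l) (y : List Y) (hy : y.length = M) :
    ((blockSwitch d i j k l y).take d,
      ∑ n ∈ Finset.range ((blockSwitch d i j k l y).length - d),
        ((2 : ℝ) ^ c (seg (blockSwitch d i j k l y) n (n + d + 1)))⁻¹) =
    (y.take d, ∑ n ∈ Finset.range (y.length - d), ((2 : ℝ) ^ c (seg y n (n + d + 1)))⁻¹) := by
  subst hy
  obtain ⟨hij, hjk, hkl, hlM⟩ := hb
  unfold blockSwitch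
  split_ifs with H
  swap
  · rfl
  set z : List Y := y.take i ++ seg y k l ++ seg y j k ++ seg y i j ++ y.drop l with hzdef
  have Heq : ∀ a b : ℕ, a = b → y[a]? = y[b]? := fun a b h => by rw [h]
  -- pointwise versions of the overlap hypotheses
  have H1 : ∀ a b : ℕ, i ≤ a → a < i + d → a + k = b + i → y[a]? = y[b]? := by
    intro a b h1 h2 h3
    have h := congrArg (fun w : List Y => w[a - i]?) H.1
    rw [seg_getElem?_eq _ _ _ _ (by omega), seg_getElem?_eq _ _ _ _ (by omega)] at h
    rw [show a = i + (a - i) by omega]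
    rw [show b = k + (a - i) by omega]
    exact h
  have H2 : ∀ a b : ℕ, j - d ≤ a → a < j → a + l = b + j → y[a]? = y[b]? := by
    intro a b h1 h2 h3
    have h := congrArg (fun w : List Y => w[a - (j - d)]?) H.2
    rw [seg_getElem?_eq _ _ _ _ (by omega), seg_getElem?_eq _ _ _ _ (by omega)] at h
    rw [show a = (j - d) + (a - (j - d)) by omega]
    rw [show b = (l - d) + (a - (j - d)) by omega]
    exact h
  -- pointwise description of z
  have hz : ∀ m : ℕ, z[m]? =
      if m < i then y[m]?
      else if m < i + (l - k) then y[m - i + k]?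
      else if m < i + (l - j) then y[(m + j) - (i + (l - k))]?
      else if m < l then y[(m + i) - (i + (l - j))]?
      else y[m]? := by
    intro m
    have lA : (y.take i).length = i := by rw [List.length_take]; omega
    have lB : (seg y k l).length = l - k := by
      simp [seg, List.length_take, List.length_drop]; omega
    have lC : (seg y j k).length = k - j := by
      simp [seg, List.length_take, List.length_drop]; omega
    have lD : (seg y i j).length = j - i := by
      simp [seg, List.length_take, List.length_drop]; omega
    rw [hzdef]
    rw [List.getElem?_append, List.getElem?_append, List.getElem?_append,
      List.getElem?_append]
    simp only [List.length_append, lA, lB, lC, lD]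
    split_ifs with h1 h2 h3 h4 h5 h6 h7 h8 h9 h10 <;>
      first
        | (rw [List.getElem?_take, if_pos (show m < i from by omega)])
        | (rw [seg_getElem?_eq _ _ _ _ (by omega)]; exact Heq _ _ (by omega))
        | (rw [List.getElem?_drop]; exact Heq _ _ (by omega))
        | omega
  have hzlen : z.length = y.length := by
    rw [hzdef]
    simp only [List.length_append, List.length_take, List.length_drop, seg,
      List.length_take, List.length_drop]
    omega
  -- the windows of z are the windows of y, reindexed by phiB
  have hwin : ∀ n : ℕ, n < y.length - d →
      seg z n (n + d + 1) = seg y (phiB d i j k l n) (phiB d i j k l n + d + 1) := by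
    intro n hn
    apply List.ext_getElem?
    intro t
    by_cases ht : t < d + 1
    · rw [seg_getElem?_eq _ _ _ _ (by omega), seg_getElem?_eq _ _ _ _ (by omega)]
      rw [hz (n + t)]
      unfold phiB
      split_ifs <;>
        first
          | exact Heq _ _ (by omega)
          | exact H1 _ _ (by omega) (by omega) (by omega)
          | exact (H1 _ _ (by omega) (by omega) (by omega)).symm
          | exact H2 _ _ (by omega) (by omega) (by omega)
          | exact (H2 _ _ (by omega) (by omega) (by omega)).symm
    · rw [List.getElem?_eq_none (le_trans (seg_length_le _ _ _) (by omega)),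
        List.getElem?_eq_none (le_trans (seg_length_le _ _ _) (by omega))]
  -- the two components
  rw [Prod.mk.injEq]
  constructor
  · -- first components: take d
    apply List.ext_getElem?
    intro t
    rw [List.getElem?_take, List.getElem?_take]
    by_cases ht : t < d
    · rw [if_pos ht, if_pos ht, hz t]
      split_ifs <;>
        first
          | exact Heq _ _ (by omega)
          | exact (H1 _ _ (by omega) (by omega) (by omega)).symm
    · rw [if_neg ht, if_neg ht]
  · -- second components: the sums
    rw [hzlen]
    refine Finset.sum_nbij' (fun n => phiB d i j k l n) (fun n => phiB' d i j k l n)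
      ?_ ?_ ?_ ?_ ?_
    · intro a ha
      simp only [Finset.mem_range] at ha ⊢
      unfold phiB
      split_ifs <;> omega
    · intro a ha
      simp only [Finset.mem_range] at ha ⊢
      unfold phiB'
      split_ifs <;> omega
    · intro a ha
      exact phiB'_phiB d i j k l a hij hjk hkl
    · intro a ha
      exact phiB_phiB' d i j k l a hij hjk hkl
    · intro a ha
      simp only [Finset.mem_range] at ha
      rw [hwin a ha]
end

section
/- The law of a d-th order Markov chain is d-block-switch invariant: if p(y) = μ(y_{1:d}) Π_{i=d+1}^{M} q(y_i | y_{(i-d):(i-1)}) for functions μ: Y^d → [0,1] and q: Y × Y^d → [0,1], then p(T_b^{(d)}(y)) = p(y) for every y ∈ Y^M and every d-block-switch transformation T_b^{(d)}. -/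
open scoped Classical

variable {Y : Type*}

def wl (d : ℕ) (z : List Y) : List (List Y) :=
  (List.range (z.length - d)).map fun n => seg z n (n + d + 1)

lemma wl_left (d : ℕ) (A C : List Y) (h : d ≤ C.length) :
    wl d (A ++ C) = wl d (A ++ C.take d) ++ wl d C := by
  unfold wl
  have h1 : (A ++ C).length - d = A.length + (C.length - d) := by
    simp only [List.length_append]; omega
  have h2 : (A ++ C.take d).length - d = A.length := by
    simp only [List.length_append, List.length_take]; omega
  rw [h1, h2, List.range_add, List.map_append, List.map_map]
  congr 1
  · refine List.map_congr_left fun n hn => ?_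
    have hn : n < A.length := List.mem_range.mp hn
    show seg (A ++ C) n (n + d + 1) = seg (A ++ C.take d) n (n + d + 1)
    unfold seg
    rw [List.drop_append, List.drop_append]
    have hn0 : n - A.length = 0 := by omega
    rw [hn0]
    simp only [List.drop_zero]
    rw [List.take_append, List.take_append, List.take_take]
    congr 2
    have hl : (A.drop n).length = A.length - n := List.length_drop ..
    omega
  · refine List.map_congr_left fun m hm => ?_
    have hm : m < C.length - d := List.mem_range.mp hm
    show seg (A ++ C) (A.length + m) (A.length + m + d + 1) = seg C m (m + d + 1)
    unfold seg
    rw [List.drop_append]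
    have h0 : A.drop (A.length + m) = [] := by
      apply List.drop_eq_nil_of_le; omega
    rw [h0]
    simp only [List.nil_append]
    have e1 : A.length + m - A.length = m := by omega
    have e2 : A.length + m + d + 1 - (A.length + m) = m + d + 1 - m := by omega
    rw [e1, e2]

lemma wl_right (d : ℕ) (A C : List Y) (h : d ≤ A.length) :
    wl d (A ++ C) = wl d A ++ wl d (A.drop (A.length - d) ++ C) := by
  unfold wl
  have h1 : (A ++ C).length - d = (A.length - d) + ((A.drop (A.length - d) ++ C).length - d) := by
    simp only [List.length_append, List.length_drop]; omega
  have h2 : (A.drop (A.length - d) ++ C).length - d = C.length := by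
    simp only [List.length_append, List.length_drop]; omega
  rw [h1, h2, List.range_add, List.map_append, List.map_map]
  congr 1
  · have h3 : A.length - d = A.length - d := rfl
    refine List.map_congr_left fun n hn => ?_
    have hn : n < A.length - d := List.mem_range.mp hn
    show seg (A ++ C) n (n + d + 1) = seg A n (n + d + 1)
    unfold seg
    rw [List.drop_append, List.take_append]
    have hl : (A.drop n).length = A.length - n := List.length_drop ..
    have h0 : n + d + 1 - n - (A.drop n).length = 0 := by omega
    rw [h0]
    simp
  · refine List.map_congr_left fun m hm => ?_
    have hm : m < C.length := List.mem_range.mp hm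
    show seg (A ++ C) (A.length - d + m) (A.length - d + m + d + 1)
        = seg (A.drop (A.length - d) ++ C) m (m + d + 1)
    unfold seg
    rw [List.drop_append, List.drop_append]
    have e1 : A.drop (A.length - d + m) = (A.drop (A.length - d)).drop m := by
      rw [List.drop_drop]
    have e2 : A.length - d + m - A.length = m - (A.drop (A.length - d)).length := by
      simp only [List.length_drop]; omega
    rw [e1, e2]
    congr 1
    omega

lemma decomp (d : ℕ) (P X Mid Z S : List Y) (hx : d ≤ X.length) (hz : d ≤ Z.length) :
    (↑(wl d (P ++ (X ++ (Mid ++ (Z ++ S))))) : Multiset (List Y)) =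
      ↑(wl d (P ++ X.take d)) + ↑(wl d X)
      + ↑(wl d ((X.drop (X.length - d) ++ Mid) ++ Z.take d))
      + ↑(wl d Z) + ↑(wl d (Z.drop (Z.length - d) ++ S)) := by
  have hC : d ≤ (X ++ (Mid ++ (Z ++ S))).length := by
    simp only [List.length_append]; omega
  have hZS : d ≤ (Z ++ S).length := by simp only [List.length_append]; omega
  have s1 : wl d (P ++ (X ++ (Mid ++ (Z ++ S))))
      = wl d (P ++ X.take d) ++ wl d (X ++ (Mid ++ (Z ++ S))) := by
    rw [wl_left d P _ hC, List.take_append_of_le_length hx]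
  have s2 : wl d (X ++ (Mid ++ (Z ++ S)))
      = wl d X ++ wl d (X.drop (X.length - d) ++ (Mid ++ (Z ++ S))) :=
    wl_right d X _ hx
  have s3 : X.drop (X.length - d) ++ (Mid ++ (Z ++ S))
      = (X.drop (X.length - d) ++ Mid) ++ (Z ++ S) := by
    rw [List.append_assoc]
  have s4 : wl d ((X.drop (X.length - d) ++ Mid) ++ (Z ++ S))
      = wl d ((X.drop (X.length - d) ++ Mid) ++ Z.take d) ++ wl d (Z ++ S) := by
    rw [wl_left d _ _ hZS, List.take_append_of_le_length hz]
  have s5 : wl d (Z ++ S) = wl d Z ++ wl d (Z.drop (Z.length - d) ++ S) :=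
    wl_right d Z S hz
  rw [s1, s2, s3, s4, s5]
  simp only [← Multiset.coe_add]
  abel

lemma core (d : ℕ) (P B1 Mid B2 S : List Y) (h1 : d ≤ B1.length) (h2 : d ≤ B2.length)
    (hh : B1.take d = B2.take d) (ht : B1.drop (B1.length - d) = B2.drop (B2.length - d)) :
    (↑(wl d (P ++ (B1 ++ (Mid ++ (B2 ++ S))))) : Multiset (List Y)) =
    ↑(wl d (P ++ (B2 ++ (Mid ++ (B1 ++ S))))) := by
  rw [decomp d P B1 Mid B2 S h1 h2, decomp d P B2 Mid B1 S h2 h1, hh, ht]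
  abel

lemma take_d_eq (d : ℕ) (P C C' : List Y) (h : C.take d = C'.take d) :
    (P ++ C).take d = (P ++ C').take d := by
  rw [List.take_append, List.take_append]
  have e : ∀ L : List Y, L.take (d - P.length) = (L.take d).take (d - P.length) := by
    intro L; rw [List.take_take]; congr 1; omega
  rw [e C, e C', h]

/-- The law of a d-th order Markov chain, p(y) = μ(y_{1:d}) Π q(window), is d-block-switch
invariant. -/
theorem markov_law_blockSwitch_invariant (μInit : List Y → ℝ) (q : List Y → ℝ)
    {d M : ℕ} (hM : d + 1 ≤ M) {i j k l : ℕ} (hb : ValidIdx d M i j k l)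
    (y : List Y) (hy : y.length = M) :
    μInit ((blockSwitch d i j k l y).take d) *
        ∏ n ∈ Finset.range ((blockSwitch d i j k l y).length - d),
          q (seg (blockSwitch d i j k l y) n (n + d + 1)) =
    μInit (y.take d) * ∏ n ∈ Finset.range (y.length - d), q (seg y n (n + d + 1)) := by
  obtain ⟨hij, hjk, hkl, hlM⟩ := hb
  have prod_wl : ∀ z : List Y, ∏ n ∈ Finset.range (z.length - d), q (seg z n (n + d + 1))
      = ((wl d z).map q).prod := by
    intro z; rw [wl, List.map_map]; rfl
  unfold blockSwitch
  split_ifs with hcond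
  case neg => rfl
  obtain ⟨hc1, hc2⟩ := hcond
  have hlB1 : (seg y i j).length = j - i := by
    simp only [seg, List.length_take, List.length_drop]; omega
  have hlB2 : (seg y k l).length = l - k := by
    simp only [seg, List.length_take, List.length_drop]; omega
  have hd1 : d ≤ (seg y i j).length := by omega
  have hd2 : d ≤ (seg y k l).length := by omega
  have etake : ∀ a b : ℕ, a + d ≤ b → (seg y a b).take d = seg y a (a + d) := by
    intro a b hab
    unfold seg
    rw [List.take_take]
    congr 1
    omega
  have hh : (seg y i j).take d = (seg y k l).take d := by
    rw [etake i j (by omega), etake k l (by omega), hc1]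
  have edrop : ∀ a b : ℕ, a + d ≤ b → (seg y a b).drop (b - a - d) = seg y (b - d) b := by
    intro a b hab
    unfold seg
    rw [List.drop_take, List.drop_drop]
    congr 1
    · omega
    · congr 1
      omega
  have ht : (seg y i j).drop ((seg y i j).length - d)
      = (seg y k l).drop ((seg y k l).length - d) := by
    rw [hlB1, hlB2, edrop i j (by omega), edrop k l (by omega), hc2]
  have hseg : ∀ a b : ℕ, a ≤ b → y.drop a = seg y a b ++ y.drop b := by
    intro a b hab
    conv_lhs => rw [← List.take_append_drop (b - a) (y.drop a)]
    rw [List.drop_drop]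
    unfold seg
    congr 2
    omega
  have hyd : y = y.take i ++ (seg y i j ++ (seg y j k ++ (seg y k l ++ y.drop l))) := by
    conv_lhs => rw [← List.take_append_drop i y, hseg i j (by omega),
      hseg j k (by omega), hseg k l (by omega)]
  have hyd' : y.take i ++ seg y k l ++ seg y j k ++ seg y i j ++ y.drop l
      = y.take i ++ (seg y k l ++ (seg y j k ++ (seg y i j ++ y.drop l))) := by
    simp [List.append_assoc]
  have hwin : (↑(wl d (y.take i ++ seg y k l ++ seg y j k ++ seg y i j ++ y.drop l))
      : Multiset (List Y)) = ↑(wl d y) := by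
    rw [hyd']
    conv_rhs => rw [hyd]
    exact (core d (y.take i) (seg y i j) (seg y j k) (seg y k l) (y.drop l)
      hd1 hd2 hh ht).symm
  have htake : (y.take i ++ seg y k l ++ seg y j k ++ seg y i j ++ y.drop l).take d
      = y.take d := by
    rw [hyd']
    conv_rhs => rw [hyd]
    refine take_d_eq d _ _ _ ?_
    rw [List.take_append_of_le_length hd2, List.take_append_of_le_length hd1, hh]
  rw [prod_wl, prod_wl, htake]
  congr 1
  have := congrArg (fun s : Multiset (List Y) => (s.map q).prod) hwin
  simpa using this
end

section
/- Any function of the PEN form is d-block-switch invariant: for any functions φ: Y^{d+1} → ℝ and ρ: Y^d × ℝ → A, the function F(y) = ρ(y_{1:d}, Σ_{i=1}^{M-d} φ(y_{i:(i+d)})) satisfies F(T_b^{(d)}(y)) = F(y) for all y ∈ Y^M and all d-block-switch transformations T_b^{(d)}. -/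
open scoped Classical
set_option maxHeartbeats 1000000
set_option linter.unreachableTactic false
set_option linter.unusedTactic false

variable {Y : Type*}

/-- Map from window-positions of the switched list to window-positions of the original list. -/
def tauF (d i j k l m : ℕ) : ℕ :=
  if m < i then m
  else if m < i + (l - k) - d then m + (k - i)
  else if m < i + (l - j) then m - (i + (l - k) - d) + (j - d)
  else if m < l - d then m - (l - j)
  else m

/-- Map from window-positions of the original list to window-positions of the switched list. -/
def tauG (d i j k l n : ℕ) : ℕ :=
  if n < i then n
  else if n < j - d then n + (l - j)
  else if n < k then n - (j - d) + (i + (l - k) - d)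
  else if n < l - d then n - (k - i)
  else n

lemma seg_getElem? (y : List Y) (a b q : ℕ) :
    (seg y a b)[q]? = if q < b - a then y[a + q]? else none := by
  simp [seg, List.getElem?_take]

/-- Any function of the PEN form F(y) = ρ(y_{1:d}, Σ_i φ(y_{i:(i+d)})) is d-block-switch
invariant. -/
theorem pen_blockSwitch_invariant {A : Type*} (φ : List Y → ℝ) (ρ : List Y → ℝ → A)
    {d M : ℕ} (hM : d + 1 ≤ M) {i j k l : ℕ} (hb : ValidIdx d M i j k l)
    (y : List Y) (hy : y.length = M) :
    ρ ((blockSwitch d i j k l y).take d)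
        (∑ n ∈ Finset.range ((blockSwitch d i j k l y).length - d),
          φ (seg (blockSwitch d i j k l y) n (n + d + 1))) =
    ρ (y.take d) (∑ n ∈ Finset.range (y.length - d), φ (seg y n (n + d + 1))) := by
  obtain ⟨h1, h2, h3, h4⟩ := hb
  rw [blockSwitch]
  split_ifs with hc
  swap
  · rfl
  obtain ⟨hc1, hc2⟩ := hc
  set z : List Y := y.take i ++ seg y k l ++ seg y j k ++ seg y i j ++ y.drop l with hzdef
  have hzlen : z.length = M := by
    simp only [hzdef, List.length_append, List.length_take, List.length_drop, seg,
      List.length_drop, List.length_take]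
    omega
  -- entries of z in terms of entries of y
  have hz1 : ∀ p, p < i → z[p]? = y[p]? := by
    intro p hp
    simp only [hzdef, List.getElem?_append, List.length_append, List.length_take, seg,
      List.length_drop, List.getElem?_take, List.getElem?_drop]
    split_ifs <;> first | rfl | omega
  have hz2 : ∀ p, i ≤ p → p < i + (l - k) → z[p]? = y[k + (p - i)]? := by
    intro p hp hp'
    simp only [hzdef, List.getElem?_append, List.length_append, List.length_take, seg,
      List.length_drop, List.getElem?_take, List.getElem?_drop]
    split_ifs <;> first | (congr 1; omega) | omega
  have hz3 : ∀ p, i + (l - k) ≤ p → p < i + (l - j) → z[p]? = y[j + (p - (i + (l - k)))]? := by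
    intro p hp hp'
    simp only [hzdef, List.getElem?_append, List.length_append, List.length_take, seg,
      List.length_drop, List.getElem?_take, List.getElem?_drop]
    split_ifs <;> first | (congr 1; omega) | omega
  have hz4 : ∀ p, i + (l - j) ≤ p → p < l → z[p]? = y[i + (p - (i + (l - j)))]? := by
    intro p hp hp'
    simp only [hzdef, List.getElem?_append, List.length_append, List.length_take, seg,
      List.length_drop, List.getElem?_take, List.getElem?_drop]
    split_ifs <;> first | (congr 1; omega) | omega
  have hz5 : ∀ p, l ≤ p → z[p]? = y[p]? := by
    intro p hp
    simp only [hzdef, List.getElem?_append, List.length_append, List.length_take, seg,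
      List.length_drop, List.getElem?_take, List.getElem?_drop]
    split_ifs <;> first | (congr 1; omega) | omega
  -- the agreement hypotheses, entrywise
  have hA : ∀ r, r < d → y[i + r]? = y[k + r]? := by
    intro r hr
    have := congrArg (fun t => t[r]?) hc1
    simpa [seg_getElem?, hr] using this
  have hB : ∀ r, r < d → y[j - d + r]? = y[l - d + r]? := by
    intro r hr
    have := congrArg (fun t => t[r]?) hc2
    simpa [seg_getElem?, show r < j - (j - d) by omega, show r < l - (l - d) by omega] using this
  -- the take d prefix is preserved
  have htake : z.take d = y.take d := by
    apply List.ext_getElem?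
    intro p
    rw [List.getElem?_take, List.getElem?_take]
    split_ifs with hp
    · by_cases hpi : p < i
      · exact hz1 p hpi
      · rw [hz2 p (by omega) (by omega)]
        have := hA (p - i) (by omega)
        rw [show i + (p - i) = p by omega] at this
        exact this.symm
    · rfl
  -- window equality
  have hwin : ∀ m, m < M - d →
      seg z m (m + d + 1) = seg y (tauF d i j k l m) (tauF d i j k l m + d + 1) := by
    intro m hm
    apply List.ext_getElem?
    intro q
    rw [seg_getElem?, seg_getElem?]
    rw [show m + d + 1 - m = d + 1 by omega,
      show tauF d i j k l m + d + 1 - tauF d i j k l m = d + 1 by omega]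
    split_ifs with hq
    swap
    · rfl
    -- now z[m+q]? = y[tauF m + q]?
    unfold tauF
    split_ifs with c1 c2 c3 c4
    · -- m < i
      by_cases hmq : m + q < i
      · exact hz1 _ hmq
      · rw [hz2 _ (by omega) (by omega)]
        have := hA (m + q - i) (by omega)
        rw [show i + (m + q - i) = m + q by omega] at this
        rw [show k + (m + q - i) = k + (m + q - i) from rfl]
        exact this.symm
    · -- m ∈ [i, i + (l-k) - d): fully inside B
      rw [hz2 _ (by omega) (by omega)]
      congr 1
      omega
    · -- m ∈ [i + (l-k) - d, i + (l-j)): crossing B' → C' (→ D')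
      by_cases s1 : m + q < i + (l - k)
      · -- still in B', matched via hB
        rw [hz2 _ (by omega) (by omega)]
        have := hB (m + q - (i + (l - k) - d)) (by omega)
        rw [show l - d + (m + q - (i + (l - k) - d)) = k + (m + q - i) by omega] at this
        rw [show j - d + (m + q - (i + (l - k) - d))
            = m - (i + (l - k) - d) + (j - d) + q by omega] at this
        exact this.symm
      · by_cases s2 : m + q < i + (l - j)
        · -- in C'
          rw [hz3 _ (by omega) (by omega)]
          congr 1
          omega
        · -- in D', matched via hA
          rw [hz4 _ (by omega) (by omega)]
          have := hA (m - (i + (l - k) - d) + (j - d) + q - k) (by omega)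
          rw [show i + (m - (i + (l - k) - d) + (j - d) + q - k)
              = i + (m + q - (i + (l - j))) by omega] at this
          rw [show k + (m - (i + (l - k) - d) + (j - d) + q - k)
              = m - (i + (l - k) - d) + (j - d) + q by omega] at this
          exact this
    · -- m ∈ [i + (l-j), l - d): fully inside D'
      rw [hz4 _ (by omega) (by omega)]
      congr 1
      omega
    · -- m ≥ l - d
      by_cases s1 : m + q < l
      · rw [hz4 _ (by omega) (by omega)]
        have := hB (m + q - (l - d)) (by omega)
        rw [show j - d + (m + q - (l - d)) = i + (m + q - (i + (l - j))) by omega,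
          show l - d + (m + q - (l - d)) = m + q by omega] at this
        exact this
      · exact hz5 _ (by omega)
  rw [hy, hzlen, htake]
  congr 1
  refine Finset.sum_nbij' (tauF d i j k l) (tauG d i j k l) ?_ ?_ ?_ ?_ ?_
  · intro a ha
    simp only [Finset.mem_range] at *
    unfold tauF
    split_ifs <;> omega
  · intro a ha
    simp only [Finset.mem_range] at *
    unfold tauG
    split_ifs <;> omega
  · intro a ha
    simp only [Finset.mem_range] at ha
    unfold tauF tauG
    split_ifs <;> omega
  · intro a ha
    simp only [Finset.mem_range] at ha
    unfold tauF tauG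
    split_ifs <;> omega
  · intro a ha
    simp only [Finset.mem_range] at ha
    rw [hwin a ha]
end

section
/- The sum-of-powers encoding is injective on multisets of bounded size: let c: Y → ℕ be injective and M a positive natural number, and define c'(y) = K · c(y) where 2^K > M. Then for any two tuples x, y ∈ Y^M, Σ_{i=1}^M 2^{-c'(x_i)} = Σ_{i=1}^M 2^{-c'(y_i)} implies that the multisets {x_1,...,x_M} and {y_1,...,y_M} are equal. -/
open scoped Classical

variable {Y : Type*}

private lemma msum_nonneg {b : ℕ} (hb : 2 ≤ b) (t : Multiset ℕ) :
    0 ≤ (t.map fun n => ((b : ℝ) ^ n)⁻¹).sum := by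
  apply Multiset.sum_nonneg
  intro r hr
  simp only [Multiset.mem_map] at hr
  obtain ⟨n, _, rfl⟩ := hr
  have : (0:ℝ) < b := by positivity
  positivity

private lemma msum_eq_zero {b : ℕ} (hb : 2 ≤ b) (t : Multiset ℕ)
    (h : (t.map fun n => ((b : ℝ) ^ n)⁻¹).sum = 0) : t = 0 := by
  by_contra ht
  obtain ⟨n, hn⟩ := Multiset.exists_mem_of_ne_zero ht
  have hle : ((b:ℝ) ^ n)⁻¹ ≤ (t.map fun n => ((b : ℝ) ^ n)⁻¹).sum := by
    refine Multiset.single_le_sum ?_ _ (Multiset.mem_map_of_mem _ hn)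
    intro r hr
    simp only [Multiset.mem_map] at hr
    obtain ⟨m, _, rfl⟩ := hr
    have hb' : (0:ℝ) < b := by exact_mod_cast Nat.lt_of_lt_of_le (by norm_num) hb
    positivity
  have hb' : (0:ℝ) < b := by exact_mod_cast Nat.lt_of_lt_of_le (by norm_num) hb
  have : (0:ℝ) < ((b:ℝ) ^ n)⁻¹ := by positivity
  linarith

private lemma msum_lt {b : ℕ} (hb : 2 ≤ b) (t : Multiset ℕ) (m : ℕ)
    (hcard : t.card < b) (hgt : ∀ n ∈ t, m < n) :
    (t.map fun n => ((b : ℝ) ^ n)⁻¹).sum < ((b : ℝ) ^ m)⁻¹ := by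
  have hb' : (0:ℝ) < b := by exact_mod_cast Nat.lt_of_lt_of_le (by norm_num) hb
  have hb1 : (1:ℝ) ≤ b := by exact_mod_cast Nat.le_of_lt (Nat.lt_of_lt_of_le (by norm_num) hb)
  have h1 : (t.map fun n => ((b : ℝ) ^ n)⁻¹).sum ≤ (t.card : ℝ) * ((b:ℝ) ^ (m+1))⁻¹ := by
    have := Multiset.sum_le_card_nsmul (t.map fun n => ((b : ℝ) ^ n)⁻¹) (((b:ℝ) ^ (m+1))⁻¹) ?_
    · simpa [Multiset.card_map, nsmul_eq_mul] using this
    · intro r hr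
      simp only [Multiset.mem_map] at hr
      obtain ⟨n, hn, rfl⟩ := hr
      have : (b:ℝ) ^ (m+1) ≤ (b:ℝ) ^ n := pow_le_pow_right₀ hb1 (hgt n hn)
      exact inv_anti₀ (by positivity) this
  have h2 : (t.card : ℝ) * ((b:ℝ) ^ (m+1))⁻¹ < (b:ℝ) * ((b:ℝ) ^ (m+1))⁻¹ := by
    have : (t.card : ℝ) < b := by exact_mod_cast hcard
    have hpos : (0:ℝ) < ((b:ℝ) ^ (m+1))⁻¹ := by positivity
    exact mul_lt_mul_of_pos_right this hpos
  have h3 : (b:ℝ) * ((b:ℝ) ^ (m+1))⁻¹ = ((b:ℝ) ^ m)⁻¹ := by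
    field_simp
    ring
  linarith


private lemma mem_of_min {b : ℕ} (hb : 2 ≤ b) {s t : Multiset ℕ} {m : ℕ}
    (hm : m ∈ s) (hmin : ∀ n ∈ t, m ≤ n) (ht : t.card < b)
    (hsum : (s.map fun n => ((b : ℝ) ^ n)⁻¹).sum = (t.map fun n => ((b : ℝ) ^ n)⁻¹).sum) :
    m ∈ t := by
  by_contra hmt
  have hgt : ∀ n ∈ t, m < n := fun n hn => lt_of_le_of_ne (hmin n hn)
    (fun h => hmt (h ▸ hn))
  have h1 := msum_lt hb t m ht hgt
  have h2 : ((b:ℝ) ^ m)⁻¹ ≤ (s.map fun n => ((b : ℝ) ^ n)⁻¹).sum := by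
    refine Multiset.single_le_sum ?_ _ (Multiset.mem_map_of_mem _ hm)
    intro r hr
    simp only [Multiset.mem_map] at hr
    obtain ⟨n, _, rfl⟩ := hr
    have hb' : (0:ℝ) < b := by exact_mod_cast Nat.lt_of_lt_of_le (by norm_num) hb
    positivity
  linarith

private lemma key {b : ℕ} (hb : 2 ≤ b) :
    ∀ N (s t : Multiset ℕ), s.card ≤ N → s.card < b → t.card < b →
      (s.map fun n => ((b : ℝ) ^ n)⁻¹).sum = (t.map fun n => ((b : ℝ) ^ n)⁻¹).sum →
      s = t := by
  intro N
  induction N with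
  | zero =>
    intro s t hsN _ _ hsum
    have hs0 : s = 0 := Multiset.card_eq_zero.mp (Nat.le_zero.mp hsN)
    subst hs0
    simp only [Multiset.map_zero, Multiset.sum_zero] at hsum
    exact (msum_eq_zero hb t hsum.symm).symm
  | succ N ih =>
    intro s t hsN hsb htb hsum
    rcases eq_or_ne s 0 with rfl | hs0
    · simp only [Multiset.map_zero, Multiset.sum_zero] at hsum
      exact (msum_eq_zero hb t hsum.symm).symm
    · have hne : {n | n ∈ s + t}.Nonempty := by
        obtain ⟨a, ha⟩ := Multiset.exists_mem_of_ne_zero hs0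
        exact ⟨a, Multiset.mem_add.mpr (Or.inl ha)⟩
      set m := sInf {n | n ∈ s + t} with hmdef
      have hmmem : m ∈ s + t := Nat.sInf_mem hne
      have hmin : ∀ n ∈ s + t, m ≤ n := fun n hn => Nat.sInf_le hn
      have hms : m ∈ s ∧ m ∈ t := by
        rcases Multiset.mem_add.mp hmmem with h | h
        · exact ⟨h, mem_of_min hb h (fun n hn => hmin n (Multiset.mem_add.mpr (Or.inr hn))) htb hsum⟩
        · exact ⟨mem_of_min hb h (fun n hn => hmin n (Multiset.mem_add.mpr (Or.inl hn))) hsb hsum.symm, h⟩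
      obtain ⟨hmsm, hmtm⟩ := hms
      have hes : ((b:ℝ)^m)⁻¹ + ((s.erase m).map fun n => ((b : ℝ) ^ n)⁻¹).sum
          = (s.map fun n => ((b : ℝ) ^ n)⁻¹).sum := by
        rw [← Multiset.sum_map_erase (f := fun n => ((b : ℝ) ^ n)⁻¹) hmsm]
      have het : ((b:ℝ)^m)⁻¹ + ((t.erase m).map fun n => ((b : ℝ) ^ n)⁻¹).sum
          = (t.map fun n => ((b : ℝ) ^ n)⁻¹).sum := by
        rw [← Multiset.sum_map_erase (f := fun n => ((b : ℝ) ^ n)⁻¹) hmtm]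
      have hcard_s : (s.erase m).card = s.card - 1 := Multiset.card_erase_of_mem hmsm
      have h1 : (s.erase m).card ≤ N := by
        have := Multiset.card_pos.mpr hs0
        omega
      have h2 : (s.erase m).card < b := by omega
      have h3 : (t.erase m).card < b :=
        lt_of_le_of_lt (Multiset.card_erase_le) htb
      have heq := ih (s.erase m) (t.erase m) h1 h2 h3 (by linarith)
      have : s = m ::ₘ s.erase m := (Multiset.cons_erase hmsm).symm
      rw [this, heq, Multiset.cons_erase hmtm]


/-- The sum-of-powers encoding is injective on multisets of bounded size: for injective
c : Y → ℕ and 2^K > M, equal sums Σ 2^{-K·c(x_i)} over two M-tuples force equal multisets. -/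
theorem sum_pow_encoding_injective (c : Y → ℕ) (hc : Function.Injective c)
    {M K : ℕ} (hM : 0 < M) (hK : M < 2 ^ K)
    (x y : List Y) (hx : x.length = M) (hy : y.length = M)
    (hsum : (x.map fun a => ((2 : ℝ) ^ (K * c a))⁻¹).sum
          = (y.map fun a => ((2 : ℝ) ^ (K * c a))⁻¹).sum) :
    (x : Multiset Y) = (y : Multiset Y) := by
  have hb : 2 ≤ 2 ^ K := by omega
  have hconv : ∀ z : List Y,
      (((z : Multiset Y).map c).map fun n => (((2 ^ K : ℕ) : ℝ) ^ n)⁻¹).sum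
        = (z.map fun a => ((2 : ℝ) ^ (K * c a))⁻¹).sum := by
    intro z
    simp only [Multiset.map_coe, List.map_map, Multiset.sum_coe]
    congr 1
    apply List.map_congr_left
    intro a _
    push_cast
    simp [Function.comp, pow_mul]
  refine Multiset.map_injective hc (key hb M ((x : Multiset Y).map c)
    ((y : Multiset Y).map c) ?_ ?_ ?_ ?_)
  · simp [hx]
  · simpa [hx] using hK
  · simpa [hy] using hK
  · rw [hconv x, hconv y]; exact hsum
end

section
/- If x ∼ y (x and y related by a finite composition of d-block-switch transformations), then x_{1:d} = y_{1:d} and the multisets of (d+1)-length contiguous windows of x and y coincide: {x_{i:(i+d)} : 1 ≤ i ≤ M-d} = {y_{i:(i+d)} : 1 ≤ i ≤ M-d} as multisets. -/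
open scoped Classical

variable {Y : Type*}

/-- x ∼ y iff y is obtained from x by a finite composition of d-block-switch
transformations (with valid indices for sequences of length M). -/
def bsRel (d M : ℕ) (x y : List Y) : Prop :=
  ∃ ts : List (ℕ × ℕ × ℕ × ℕ),
    (∀ t ∈ ts, ValidIdx d M t.1 t.2.1 t.2.2.1 t.2.2.2) ∧
    y = ts.foldr (fun t z => blockSwitch d t.1 t.2.1 t.2.2.1 t.2.2.2 z) x

/-! A valid block switch rewrites `A ++ B ++ C ++ D ++ E` into `A ++ D ++ C ++ B ++ E`, where the
blocks `B` and `D` have length at least `d` and share their first and their last `d` symbols.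
The multiset of `(d+1)`-windows of `A ++ B ++ C ++ D ++ E` is the sum of those of the five pieces
`A ++ B.take d`, `B`, `B.rtake d ++ C ++ D.take d`, `D`, `D.rtake d ++ E`, so the switch only
permutes these summands. The first `d` symbols only see `A` and `B.take d = D.take d`. -/

section Windows

variable {d : ℕ}

theorem windows_eq_windows_take_add_windows_drop (s : List Y) {n : ℕ} (h : n + d ≤ s.length) :
    windows d s = windows d (s.take (n + d)) + windows d (s.drop n) := by
  have hwin_take : ∀ i < n, seg (s.take (n + d)) i (i + d + 1) = seg s i (i + d + 1) := by
    intro i hi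
    simp only [seg, List.drop_take, List.take_take]
    congr 1
    omega
  have hwin_drop : ∀ i, seg (s.drop n) i (i + d + 1) = seg s (n + i) (n + i + d + 1) := by
    intro i
    simp only [seg, List.drop_drop]
    congr 1
    omega
  have hcount : s.length - d = n + (s.length - n - d) := by omega
  simp only [windows, List.length_take, List.length_drop, hwin_drop,
    show min (n + d) s.length - d = n by omega, Multiset.coe_add, Multiset.coe_eq_coe]
  rw [List.map_congr_left (fun i hi => hwin_take i (List.mem_range.mp hi)), hcount,
    List.range_add, List.map_append, List.map_map]
  rfl

theorem windows_append_of_le_length_left {s : List Y} (t : List Y) (h : d ≤ s.length) :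
    windows d (s ++ t) = windows d s + windows d (s.rtake d ++ t) := by
  rw [windows_eq_windows_take_add_windows_drop (s ++ t) (n := s.length - d) (by simp; omega),
    Nat.sub_add_cancel h, List.take_left, List.drop_append_of_le_length (by omega)]
  rfl

theorem windows_append_of_le_length_right (s : List Y) {t : List Y} (h : d ≤ t.length) :
    windows d (s ++ t) = windows d (s ++ t.take d) + windows d t := by
  rw [windows_eq_windows_take_add_windows_drop (s ++ t) (n := s.length) (by simp; omega),
    List.take_length_add_append, List.drop_left]

end Windows

theorem take_append_eq_take_append_of_take_eq {d : ℕ} (u : List Y) {v v' : List Y}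
    (h : v.take d = v'.take d) : (u ++ v).take d = (u ++ v').take d := by
  have htake : ∀ w : List Y, w.take (d - u.length) = (w.take d).take (d - u.length) := fun w => by
    rw [List.take_take, min_eq_left (Nat.sub_le _ _)]
  rw [List.take_append, List.take_append, htake v, htake v', h]

def IsBlockSwap (d : ℕ) (y z : List Y) : Prop :=
  ∃ A B C D E : List Y, d ≤ B.length ∧ d ≤ D.length ∧ B.take d = D.take d ∧
    B.rtake d = D.rtake d ∧ y = A ++ B ++ C ++ D ++ E ∧ z = A ++ D ++ C ++ B ++ E

namespace IsBlockSwap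

variable {d : ℕ} {y z : List Y}

theorem length_eq (h : IsBlockSwap d y z) : z.length = y.length := by
  obtain ⟨A, B, C, D, E, -, -, -, -, rfl, rfl⟩ := h
  simp only [List.length_append]
  omega

theorem take_eq (h : IsBlockSwap d y z) : z.take d = y.take d := by
  obtain ⟨A, B, C, D, E, hB, hD, hfirst, -, rfl, rfl⟩ := h
  simp only [List.append_assoc]
  apply take_append_eq_take_append_of_take_eq
  rw [List.take_append_of_le_length hD, List.take_append_of_le_length hB, hfirst]

theorem windows_eq (h : IsBlockSwap d y z) : windows d z = windows d y := by
  obtain ⟨A, B, C, D, E, hB, hD, hfirst, hlast, rfl, rfl⟩ := h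
  have hsplit : ∀ P Q : List Y, d ≤ P.length → d ≤ Q.length →
      windows d (A ++ P ++ C ++ Q ++ E) = windows d (A ++ P.take d) + windows d P +
        windows d (P.rtake d ++ C ++ Q.take d) + windows d Q + windows d (Q.rtake d ++ E) := by
    intro P Q hP hQ
    simp only [List.append_assoc]
    rw [windows_append_of_le_length_right A (t := P ++ (C ++ (Q ++ E))) (by simp; omega),
      List.take_append_of_le_length hP, windows_append_of_le_length_left (C ++ (Q ++ E)) hP,
      ← List.append_assoc (P.rtake d),
      windows_append_of_le_length_right (P.rtake d ++ C) (t := Q ++ E) (by simp; omega),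
      List.take_append_of_le_length hQ, windows_append_of_le_length_left E hQ]
    simp only [List.append_assoc, add_assoc]
  rw [hsplit D B hD hB, hsplit B D hB hD, hfirst, hlast]
  abel

end IsBlockSwap

section Seg

variable {y : List Y} {a b : ℕ}

theorem take_append_seg (h : a ≤ b) : y.take a ++ seg y a b = y.take b := by
  rw [seg, ← List.take_add, Nat.add_sub_cancel' h]

theorem length_seg (hb : b ≤ y.length) : (seg y a b).length = b - a := by
  simp only [seg, List.length_take, List.length_drop]
  omega

theorem take_seg (d : ℕ) (h : a + d ≤ b) : (seg y a b).take d = seg y a (a + d) := by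
  simp only [seg, List.take_take]
  congr 1
  omega

theorem rtake_seg (d : ℕ) (h : a + d ≤ b) (hb : b ≤ y.length) :
    (seg y a b).rtake d = seg y (b - d) b := by
  rw [List.rtake, length_seg hb]
  simp only [seg, List.drop_take, List.drop_drop]
  rw [show a + (b - a - d) = b - d by omega, show b - a - (b - a - d) = b - (b - d) by omega]

end Seg

theorem blockSwitch_eq_self_or_isBlockSwap {d i j k l : ℕ} {y : List Y} (hij : i + d ≤ j)
    (hjk : j ≤ k) (hkl : k + d ≤ l) (hl : l ≤ y.length) :
    blockSwitch d i j k l y = y ∨ IsBlockSwap d y (blockSwitch d i j k l y) := by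
  unfold blockSwitch
  split_ifs with hmatch
  · right
    obtain ⟨hfirst, hlast⟩ := hmatch
    refine ⟨y.take i, seg y i j, seg y j k, seg y k l, y.drop l, ?_, ?_, ?_, ?_, ?_, rfl⟩
    · rw [length_seg (by omega)]; omega
    · rw [length_seg (by omega)]; omega
    · rwa [take_seg d hij, take_seg d hkl]
    · rwa [rtake_seg d hij (by omega), rtake_seg d hkl hl]
    · rw [take_append_seg (by omega), take_append_seg hjk, take_append_seg (by omega),
        List.take_append_drop]
  · exact Or.inl rfl

theorem bsRel_length_take_windows {d : ℕ} {x y : List Y} (h : bsRel d x.length x y) :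
    y.length = x.length ∧ y.take d = x.take d ∧ windows d y = windows d x := by
  obtain ⟨ts, hts, rfl⟩ := h
  induction ts with
  | nil => exact ⟨rfl, rfl, rfl⟩
  | cons t ts ih =>
    obtain ⟨hlen, htake, hwin⟩ := ih fun t' ht' => hts t' (List.mem_cons_of_mem _ ht')
    obtain ⟨hij, hjk, hkl, hl⟩ := hts t List.mem_cons_self
    rw [List.foldr_cons]
    rcases blockSwitch_eq_self_or_isBlockSwap (d := d) (i := t.1) (by omega) hjk (by omega)
      (hlen ▸ hl) with hself | hswap
    · rw [hself]
      exact ⟨hlen, htake, hwin⟩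
    · exact ⟨hswap.length_eq.trans hlen, hswap.take_eq.trans htake,
        hswap.windows_eq.trans hwin⟩

theorem bsRel_preserves_prefix_and_windows_general {d M : ℕ}
    (x y : List Y) (hx : x.length = M) (hxy : bsRel d M x y) :
    x.take d = y.take d ∧ windows d x = windows d y := by
  subst hx
  obtain ⟨-, htake, hwin⟩ := bsRel_length_take_windows hxy
  exact ⟨htake.symm, hwin.symm⟩

/-- If x ∼ y then x and y share the same initial d symbols and the same multiset of
(d+1)-length contiguous windows. -/
theorem bsRel_preserves_prefix_and_windows {d M : ℕ} (hM : d + 1 ≤ M)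
    (x y : List Y) (hx : x.length = M) (hy : y.length = M) (hxy : bsRel d M x y) :
    x.take d = y.take d ∧ windows d x = windows d y :=
  bsRel_preserves_prefix_and_windows_general x y hx hxy
end
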